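/- Let $g \in \mathrm{SL}_n(\mathbb{R})$ be unipotent, and write $g = k_1 e^X k_2$ with $k_1, k_2 \in \mathrm{SO}(n)$ and $X$ a real diagonal traceless matrix (Cartan decomposition). Then $\|X\| \ge \tfrac{1}{2}\log\left(1 + \tfrac{1}{n}\|g - I_n\|^2\right)$, where $\|A\|^2 = \sum_{i,j} A_{ij}^2$ is the Frobenius norm. -/

import Mathlib

open scoped BigOperators

/-- Frobenius norm of a real square matrix. -/
noncomputable def frobNorm {n : ℕ} (A : Matrix (Fin n) (Fin n) ℝ) : ℝ :=
  Real.sqrt (∑ i, ∑ j, (A i j) ^ 2)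

/-!
Since `g - 1` is nilpotent, `tr g = n`, so `‖g - 1‖² = tr (gᵀ g) - 2 tr g + n = ‖g‖² - n`.
The Frobenius norm is invariant under the orthogonal factors, hence
`‖g‖² = ‖e^X‖² = ∑ᵢ e^{2 Xᵢᵢ} ≤ n e^{2‖X‖}`, since every entry of `X` is at most `‖X‖`.
Thus `1 + ‖g - 1‖² / n ≤ e^{2‖X‖}`.
-/

open Matrix

theorem Matrix.trace_eq_card_of_isNilpotent_sub_one {m R : Type*} [Fintype m] [DecidableEq m]
    [CommRing R] [IsReduced R] {g : Matrix m m R} (hg : IsNilpotent (g - 1)) :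
    g.trace = Fintype.card m := by
  have h : (g - 1).trace = 0 := (isNilpotent_trace_of_isNilpotent hg).eq_zero
  rwa [trace_sub, trace_one, sub_eq_zero] at h

theorem Matrix.trace_transpose_mul_self {m k R : Type*} [Fintype m] [Fintype k] [CommSemiring R]
    (A : Matrix m k R) : (Aᵀ * A).trace = ∑ i, ∑ j, A i j ^ 2 := by
  rw [Finset.sum_comm]
  simp only [trace, diag_apply, mul_apply, transpose_apply, sq]

section FrobNorm

variable {n : ℕ}

theorem frobNorm_eq_sqrt_trace (A : Matrix (Fin n) (Fin n) ℝ) :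
    frobNorm A = √(Aᵀ * A).trace := by
  rw [frobNorm, trace_transpose_mul_self]

theorem frobNorm_sq (A : Matrix (Fin n) (Fin n) ℝ) : frobNorm A ^ 2 = (Aᵀ * A).trace := by
  rw [frobNorm, Real.sq_sqrt (by positivity), trace_transpose_mul_self]

theorem abs_apply_le_frobNorm (A : Matrix (Fin n) (Fin n) ℝ) (i j : Fin n) :
    |A i j| ≤ frobNorm A := by
  rw [← Real.sqrt_sq_eq_abs, frobNorm]
  gcongr
  calc A i j ^ 2 ≤ ∑ j', A i j' ^ 2 :=
        Finset.single_le_sum (fun _ _ ↦ sq_nonneg _) (Finset.mem_univ j)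
    _ ≤ ∑ i', ∑ j', A i' j' ^ 2 :=
        Finset.single_le_sum (f := fun i' ↦ ∑ j', A i' j' ^ 2)
          (fun _ _ ↦ Finset.sum_nonneg fun _ _ ↦ sq_nonneg _) (Finset.mem_univ i)

theorem frobNorm_orthogonal_mul_mul {k₁ k₂ : Matrix (Fin n) (Fin n) ℝ} (hk₁ : k₁ᵀ * k₁ = 1)
    (hk₂ : k₂ᵀ * k₂ = 1) (A : Matrix (Fin n) (Fin n) ℝ) :
    frobNorm (k₁ * A * k₂) = frobNorm A := by
  have hk₂' : k₂ * k₂ᵀ = 1 := mul_eq_one_comm.mp hk₂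
  rw [frobNorm_eq_sqrt_trace, frobNorm_eq_sqrt_trace, transpose_mul, transpose_mul]
  congr 1
  calc (k₂ᵀ * (Aᵀ * k₁ᵀ) * (k₁ * A * k₂)).trace
      = (k₂ᵀ * (Aᵀ * (k₁ᵀ * k₁) * A) * k₂).trace := by simp only [Matrix.mul_assoc]
    _ = (Aᵀ * A * (k₂ * k₂ᵀ)).trace := by
        rw [trace_mul_comm, ← Matrix.mul_assoc, trace_mul_comm, hk₁, Matrix.mul_one]
    _ = (Aᵀ * A).trace := by rw [hk₂', Matrix.mul_one]

theorem frobNorm_sub_one_sq_of_isNilpotent {g : Matrix (Fin n) (Fin n) ℝ}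
    (hg : IsNilpotent (g - 1)) : frobNorm (g - 1) ^ 2 = frobNorm g ^ 2 - n := by
  have htr : g.trace = n := by simpa using trace_eq_card_of_isNilpotent_sub_one hg
  have hexpand : (g - 1)ᵀ * (g - 1) = gᵀ * g - gᵀ - g + 1 := by
    simp only [transpose_sub, transpose_one, sub_mul, mul_sub, Matrix.mul_one, Matrix.one_mul]
    abel
  rw [frobNorm_sq, frobNorm_sq, hexpand, trace_add, trace_sub, trace_sub, trace_transpose, htr,
    trace_one, Fintype.card_fin]
  ring

theorem frobNorm_exp_diagonal_sq (a : Fin n → ℝ) :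
    frobNorm (NormedSpace.exp (diagonal a)) ^ 2 = ∑ i, Real.exp (2 * a i) := by
  rw [exp_diagonal, frobNorm_sq, diagonal_transpose, diagonal_mul_diagonal, trace_diagonal]
  simp only [Pi.coe_exp, ← Real.exp_eq_exp_ℝ, ← Real.exp_add, two_mul]

theorem frobNorm_exp_sq_le_of_isDiag {X : Matrix (Fin n) (Fin n) ℝ} (hX : X.IsDiag) :
    frobNorm (NormedSpace.exp X) ^ 2 ≤ n * Real.exp (2 * frobNorm X) := by
  rw [← hX.diagonal_diag, frobNorm_exp_diagonal_sq, hX.diagonal_diag]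
  calc ∑ i, Real.exp (2 * X i i) ≤ ∑ _i : Fin n, Real.exp (2 * frobNorm X) := by
        gcongr with i
        exact (le_abs_self _).trans (abs_apply_le_frobNorm X i i)
    _ = n * Real.exp (2 * frobNorm X) := by simp

end FrobNorm

theorem stmt_0_general (n : ℕ) (hn : 0 < n) (g k₁ k₂ X : Matrix (Fin n) (Fin n) ℝ)
    (hg_unip : (g - 1) ^ n = 0)
    (hk₁_orth : k₁.transpose * k₁ = 1)
    (hk₂_orth : k₂.transpose * k₂ = 1)
    (hX_diag : X.IsDiag)
    (hCartan : g = k₁ * NormedSpace.exp X * k₂) :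
    (1 / 2) * Real.log (1 + (1 / n) * (frobNorm (g - 1)) ^ 2) ≤ frobNorm X := by
  have hbound : frobNorm (g - 1) ^ 2 + n ≤ n * Real.exp (2 * frobNorm X) := by
    rw [frobNorm_sub_one_sq_of_isNilpotent ⟨n, hg_unip⟩, hCartan,
      frobNorm_orthogonal_mul_mul hk₁_orth hk₂_orth]
    linarith [frobNorm_exp_sq_le_of_isDiag hX_diag]
  have hn' : (0 : ℝ) < n := Nat.cast_pos.mpr hn
  have hlog : Real.log (1 + (1 / n) * frobNorm (g - 1) ^ 2) ≤ 2 * frobNorm X := by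
    rw [Real.log_le_iff_le_exp (by positivity)]
    calc 1 + (1 / n) * frobNorm (g - 1) ^ 2 = (frobNorm (g - 1) ^ 2 + n) / n := by
          field_simp; ring
      _ ≤ Real.exp (2 * frobNorm X) := (div_le_iff₀' hn').mpr hbound
  linarith

/-- For a unipotent `g ∈ SL(n,ℝ)` with Cartan decomposition `g = k₁ e^X k₂`
(`k₁, k₂ ∈ SO(n)`, `X` diagonal traceless), one has
`‖X‖ ≥ (1/2) log(1 + ‖g - 1‖²/n)`. -/
theorem stmt_0 (n : ℕ) (hn : 0 < n) (g k₁ k₂ X : Matrix (Fin n) (Fin n) ℝ)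
    (hg_det : g.det = 1) (hg_unip : (g - 1) ^ n = 0)
    (hk₁_orth : k₁.transpose * k₁ = 1) (hk₁_det : k₁.det = 1)
    (hk₂_orth : k₂.transpose * k₂ = 1) (hk₂_det : k₂.det = 1)
    (hX_diag : X.IsDiag) (hX_tr : X.trace = 0)
    (hCartan : g = k₁ * NormedSpace.exp X * k₂) :
    (1 / 2) * Real.log (1 + (1 / n) * (frobNorm (g - 1)) ^ 2) ≤ frobNorm X :=
  stmt_0_general n hn g k₁ k₂ X hg_unip hk₁_orth hk₂_orth hX_diag hCartan
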